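/- arXiv:1910.03873 — 6 statements merged into one kernel-verified Lean document; each statement's English description precedes it below -/
import Mathlib

section
/- Let E, A ∈ ℝ^{l×n} and let I ⊆ ℝ be an open interval. If x ∈ C¹(I → ℝⁿ) satisfies E ẋ(t) = A x(t) for all t ∈ I, then x(t) ∈ V*_{[E,A]} for all t ∈ I, where V*_{[E,A]} is the Wong limit of the pencil sE − A. -/
open Matrix Set Filter

/-- Euclidean norm of a vector in `ℝ^ι`. -/
noncomputable def enorm {ι : Type*} [Fintype ι] (x : ι → ℝ) : ℝ :=
  Real.sqrt (x ⬝ᵥ x)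

/-- Spectral (Euclidean operator) norm of a real matrix. -/
noncomputable def matNorm {ι κ : Type*} [Fintype ι] [Fintype κ] [DecidableEq κ]
    (M : Matrix ι κ ℝ) : ℝ :=
  ‖LinearMap.toContinuousLinearMap (Matrix.toEuclideanLin M)‖

/-- Largest eigenvalue of a (symmetric) real matrix, as the supremum of its eigenvalues. -/
noncomputable def lamMax {q : Type*} [Fintype q] (M : Matrix q q ℝ) : ℝ :=
  sSup {r : ℝ | ∃ v : q → ℝ, v ≠ 0 ∧ M *ᵥ v = r • v}

/-- The first Wong sequence `V^i` of the matrix pencil `sE - A`. -/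
def wongV {L N : Type*} [Fintype N] (E A : Matrix L N ℝ) : ℕ → Set (N → ℝ)
  | 0 => Set.univ
  | i + 1 => {x | A *ᵥ x ∈ (fun v => E *ᵥ v) '' wongV E A i}

/-- The first Wong limit `V* = ⋂ V^i` of the matrix pencil `sE - A`. -/
def wongVstar {L N : Type*} [Fintype N] (E A : Matrix L N ℝ) : Set (N → ℝ) :=
  ⋂ i, wongV E A i

/-- The second Wong sequence `W^i` of the matrix pencil `sE - A`. -/
def wongW {L N : Type*} [Fintype N] (E A : Matrix L N ℝ) : ℕ → Set (N → ℝ)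
  | 0 => {0}
  | i + 1 => {x | E *ᵥ x ∈ (fun v => A *ᵥ v) '' wongW E A i}

/-- The second Wong limit `W* = ⋃ W^i` of the matrix pencil `sE - A`. -/
def wongWstar {L N : Type*} [Fintype N] (E A : Matrix L N ℝ) : Set (N → ℝ) :=
  ⋃ i, wongW E A i

/-- `M <_V 0` : the quadratic form of `M` is negative on `V \ {0}`. -/
def NegDefOn {ι : Type*} [Fintype ι] (M : Matrix ι ι ℝ) (V : Set (ι → ℝ)) : Prop :=
  ∀ v ∈ V, v ≠ 0 → v ⬝ᵥ (M *ᵥ v) < 0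

/-- `M >_V 0` : the quadratic form of `M` is positive on `V \ {0}`. -/
def PosDefOn {ι : Type*} [Fintype ι] (M : Matrix ι ι ℝ) (V : Set (ι → ℝ)) : Prop :=
  ∀ v ∈ V, v ≠ 0 → 0 < v ⬝ᵥ (M *ᵥ v)

/-- `M ≥_V 0` : the quadratic form of `M` is nonnegative on `V`. -/
def PosSemidefOn {ι : Type*} [Fintype ι] (M : Matrix ι ι ℝ) (V : Set (ι → ℝ)) : Prop :=
  ∀ v ∈ V, 0 ≤ v ⬝ᵥ (M *ᵥ v)

/-- The Wong sequence as a submodule. -/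
def wongVSub {l n : ℕ} (E A : Matrix (Fin l) (Fin n) ℝ) : ℕ → Submodule ℝ (Fin n → ℝ)
  | 0 => ⊤
  | i + 1 => (Submodule.map E.mulVecLin (wongVSub E A i)).comap A.mulVecLin

lemma wongVSub_coe {l n : ℕ} (E A : Matrix (Fin l) (Fin n) ℝ) (i : ℕ) :
    (wongVSub E A i : Set (Fin n → ℝ)) = wongV E A i := by
  induction i with
  | zero => rfl
  | succ i ih =>
    ext v
    simp only [wongVSub, wongV, SetLike.mem_coe, Submodule.mem_comap, Submodule.mem_map,
      Set.mem_setOf_eq, Set.mem_image]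
    constructor
    · rintro ⟨y, hy, hEy⟩
      exact ⟨y, by rw [← ih]; exact hy, by simpa [Matrix.mulVecLin] using hEy⟩
    · rintro ⟨y, hy, hEy⟩
      exact ⟨y, by rw [← ih] at hy; exact hy, by simpa [Matrix.mulVecLin] using hEy⟩

lemma mem_closed_submodule_of_deriv {n : ℕ} (S : Submodule ℝ (Fin n → ℝ))
    (I : Set ℝ) (hIopen : IsOpen I) (x x' : ℝ → Fin n → ℝ)
    (hderiv : ∀ t ∈ I, HasDerivAt x (x' t) t)
    (hx : ∀ t ∈ I, x t ∈ S) {t : ℝ} (ht : t ∈ I) : x' t ∈ S := by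
  have hclosed : IsClosed (S : Set (Fin n → ℝ)) := Submodule.closed_of_finiteDimensional S
  have htend : Tendsto (slope x t) (nhdsWithin t {t}ᶜ) (nhds (x' t)) :=
    (hasDerivAt_iff_tendsto_slope).mp (hderiv t ht)
  have hev : ∀ᶠ s in nhdsWithin t {t}ᶜ, slope x t s ∈ (S : Set (Fin n → ℝ)) := by
    have hI : ∀ᶠ s in nhdsWithin t {t}ᶜ, s ∈ I :=
      eventually_nhdsWithin_of_eventually_nhds (hIopen.eventually_mem ht)
    filter_upwards [hI] with s hs
    exact S.smul_mem _ (S.sub_mem (hx s hs) (hx t ht))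
  exact hclosed.mem_of_tendsto htend hev

/-- If `x ∈ C¹(I → ℝⁿ)` satisfies `E ẋ(t) = A x(t)` on the open interval `I`, then
`x(t)` lies in the Wong limit `V*_{[E,A]}` for all `t ∈ I`. -/
theorem trajectories_evolve_in_wong_limit {l n : ℕ}
    (E A : Matrix (Fin l) (Fin n) ℝ)
    (I : Set ℝ) (hIopen : IsOpen I) (hIconn : I.OrdConnected)
    (x x' : ℝ → Fin n → ℝ)
    (hderiv : ∀ t ∈ I, HasDerivAt x (x' t) t)
    (hcont : ContinuousOn x' I)
    (hDAE : ∀ t ∈ I, E *ᵥ x' t = A *ᵥ x t) :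
    ∀ t ∈ I, x t ∈ wongVstar E A := by
  have key : ∀ i, ∀ t ∈ I, x t ∈ wongV E A i := by
    intro i
    induction i with
    | zero => intro t _; trivial
    | succ i ih =>
      intro t ht
      have hx' : x' t ∈ wongVSub E A i := by
        refine mem_closed_submodule_of_deriv _ I hIopen x x' hderiv ?_ ht
        intro s hs
        rw [← SetLike.mem_coe, wongVSub_coe]
        exact ih s hs
      rw [← SetLike.mem_coe, wongVSub_coe] at hx'
      exact ⟨x' t, hx', hDAE t ht⟩
  intro t ht
  exact Set.mem_iInter.mpr fun i => key i t ht
end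

section
/- Consider the nonlinear DAE system Σ and the observer candidate O. For every open interval I, every solution (x,u,y) of Σ on I and every solution ((z,d),(u,y),z) of O on I (with the same u,y), defining e(t) := z(t) − x(t) and φ(t) := f(z(t),u(t),y(t)) − f(x(t),u(t),y(t)), it holds that (e(t), d(t), φ(t)) ∈ V*_{[[ℰ,0],[𝒜,ℬ]]} for all t ∈ I, where V*_{[[ℰ,0],[𝒜,ℬ]]} is the Wong limit of the pencil s[ℰ,0] − [𝒜,ℬ] ∈ ℝ[s]^{(l+p)×(n+k+q_L+q_M)}. -/
open Matrix Set Filter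

/-- Data of the nonlinear DAE system
`d/dt (E x) = A x + B_L f_L(x,u,y) + B_M f_M(J x,u,y)`, `y = C x + h(u)`. -/
structure DAESys (l n m p qL qM : ℕ) where
  E : Matrix (Fin l) (Fin n) ℝ
  A : Matrix (Fin l) (Fin n) ℝ
  BL : Matrix (Fin l) (Fin qL) ℝ
  BM : Matrix (Fin l) (Fin qM) ℝ
  J : Matrix (Fin qM) (Fin n) ℝ
  C : Matrix (Fin p) (Fin n) ℝ
  X : Set (Fin n → ℝ)
  U : Set (Fin m → ℝ)
  Y : Set (Fin p → ℝ)
  h : (Fin m → ℝ) → (Fin p → ℝ)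
  fL : (Fin n → ℝ) → (Fin m → ℝ) → (Fin p → ℝ) → (Fin qL → ℝ)
  fM : (Fin qM → ℝ) → (Fin m → ℝ) → (Fin p → ℝ) → (Fin qM → ℝ)

namespace DAESys

variable {l n m p qL qM k : ℕ}

/-- Standing assumptions: `X`, `U`, `Y` are open, `rk J = qM`, and `f_L`, `f_M`, `h`
are continuous on their domains. -/
def Admissible (S : DAESys l n m p qL qM) : Prop :=
  IsOpen S.X ∧ IsOpen S.U ∧ IsOpen S.Y ∧ S.J.rank = qM ∧
  ContinuousOn (fun w : (Fin n → ℝ) × (Fin m → ℝ) × (Fin p → ℝ) => S.fL w.1 w.2.1 w.2.2)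
    (S.X ×ˢ S.U ×ˢ S.Y) ∧
  ContinuousOn (fun w : (Fin qM → ℝ) × (Fin m → ℝ) × (Fin p → ℝ) => S.fM w.1 w.2.1 w.2.2)
    (((fun v => S.J *ᵥ v) '' S.X) ×ˢ S.U ×ˢ S.Y) ∧
  ContinuousOn S.h S.U

/-- `(x,u,y)`, with `x` of class `C¹` with derivative `x'`, is a solution
of the system on the set `I`. -/
def IsSolutionOn (S : DAESys l n m p qL qM) (I : Set ℝ)
    (x x' : ℝ → Fin n → ℝ) (u : ℝ → Fin m → ℝ) (y : ℝ → Fin p → ℝ) : Prop :=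
  (∀ t ∈ I, x t ∈ S.X ∧ u t ∈ S.U ∧ y t ∈ S.Y) ∧
  ContinuousOn u I ∧ ContinuousOn y I ∧ ContinuousOn x' I ∧
  (∀ t ∈ I, HasDerivWithinAt x (x' t) I t) ∧
  (∀ t ∈ I, S.E *ᵥ x' t =
      S.A *ᵥ x t + S.BL *ᵥ S.fL (x t) (u t) (y t) + S.BM *ᵥ S.fM (S.J *ᵥ x t) (u t) (y t)) ∧
  (∀ t ∈ I, y t = S.C *ᵥ x t + S.h (u t))

/-- `(x,u,y)` is a solution of the system on `I` (for some `C¹`-derivative `x'`). -/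
def IsSol (S : DAESys l n m p qL qM) (I : Set ℝ) (x : ℝ → Fin n → ℝ)
    (u : ℝ → Fin m → ℝ) (y : ℝ → Fin p → ℝ) : Prop :=
  ∃ x', S.IsSolutionOn I x x' u y

/-- `((z,d),(u,y),z)`, with `z` of class `C¹` with derivative `z'`, is a solution of the
observer candidate
`d/dt (E z) = A z + B f(z,u,y) + L₁ d`, `0 = C z - y + h(u) + L₂ d` on the set `I`. -/
def ObsSolOn (S : DAESys l n m p qL qM)
    (L₁ : Matrix (Fin l) (Fin k) ℝ) (L₂ : Matrix (Fin p) (Fin k) ℝ) (I : Set ℝ)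
    (z z' : ℝ → Fin n → ℝ) (d : ℝ → Fin k → ℝ)
    (u : ℝ → Fin m → ℝ) (y : ℝ → Fin p → ℝ) : Prop :=
  (∀ t ∈ I, z t ∈ S.X) ∧
  ContinuousOn z' I ∧ ContinuousOn d I ∧
  (∀ t ∈ I, HasDerivWithinAt z (z' t) I t) ∧
  (∀ t ∈ I, S.E *ᵥ z' t =
      S.A *ᵥ z t + S.BL *ᵥ S.fL (z t) (u t) (y t) + S.BM *ᵥ S.fM (S.J *ᵥ z t) (u t) (y t)
        + L₁ *ᵥ d t) ∧
  (∀ t ∈ I, 0 = S.C *ᵥ z t - y t + S.h (u t) + L₂ *ᵥ d t)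

/-- The observer candidate is an acceptor for the system: every solution of the system
on an open interval admits a corresponding solution of the observer candidate. -/
def IsAcceptor (S : DAESys l n m p qL qM)
    (L₁ : Matrix (Fin l) (Fin k) ℝ) (L₂ : Matrix (Fin p) (Fin k) ℝ) : Prop :=
  ∀ I : Set ℝ, IsOpen I → I.OrdConnected →
    ∀ x u y, S.IsSol I x u y → ∃ z z' d, S.ObsSolOn L₁ L₂ I z z' d u y

/-- The observer candidate is a state estimator for the system: it is an acceptor and for
all solutions of system and observer candidate on `[t₀,∞)` one has `z(t) - x(t) → 0`. -/
def IsStateEstimator (S : DAESys l n m p qL qM)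
    (L₁ : Matrix (Fin l) (Fin k) ℝ) (L₂ : Matrix (Fin p) (Fin k) ℝ) : Prop :=
  S.IsAcceptor L₁ L₂ ∧
  ∀ t₀ : ℝ, ∀ x x' u y z z' d,
    S.IsSolutionOn (Set.Ici t₀) x x' u y →
    S.ObsSolOn L₁ L₂ (Set.Ici t₀) z z' d u y →
    Filter.Tendsto (fun t => z t - x t) Filter.atTop (nhds 0)

/-- The Lipschitz condition on `f_L` with matrix `F`. -/
def LipCond {j : ℕ} (S : DAESys l n m p qL qM) (F : Matrix (Fin j) (Fin n) ℝ) : Prop :=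
  ∀ x ∈ S.X, ∀ z ∈ S.X, ∀ u ∈ S.U, ∀ y ∈ S.Y,
    _root_.enorm (S.fL z u y - S.fL x u y) ≤ _root_.enorm (F *ᵥ (z - x))

/-- The generalized monotonicity condition on `f_M` with matrix `Θ` and constant `μ`. -/
def MonCond (S : DAESys l n m p qL qM) (Θ : Matrix (Fin qM) (Fin qM) ℝ) (μ : ℝ) : Prop :=
  ∀ x ∈ (fun v => S.J *ᵥ v) '' S.X, ∀ z ∈ (fun v => S.J *ᵥ v) '' S.X,
    ∀ u ∈ S.U, ∀ y ∈ S.Y,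
      μ / 2 * ((z - x) ⬝ᵥ (z - x)) ≤ (z - x) ⬝ᵥ (Θ *ᵥ (S.fM z u y - S.fM x u y))

/-- `ℰ = [[E,0],[0,0]]`. -/
def calE (S : DAESys l n m p qL qM) (k : ℕ) :
    Matrix (Fin l ⊕ Fin p) (Fin n ⊕ Fin k) ℝ :=
  Matrix.fromBlocks S.E 0 0 0

/-- `𝒜 = [[A,L₁],[C,L₂]]`. -/
def calA (S : DAESys l n m p qL qM)
    (L₁ : Matrix (Fin l) (Fin k) ℝ) (L₂ : Matrix (Fin p) (Fin k) ℝ) :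
    Matrix (Fin l ⊕ Fin p) (Fin n ⊕ Fin k) ℝ :=
  Matrix.fromBlocks S.A L₁ S.C L₂

/-- `ℬ = [[B_L, B_M],[0,0]]`. -/
def calB (S : DAESys l n m p qL qM) :
    Matrix (Fin l ⊕ Fin p) (Fin qL ⊕ Fin qM) ℝ :=
  Matrix.fromRows (Matrix.fromCols S.BL S.BM) 0

/-- `Â = [[A,0],[C,0]]`. -/
def hatA (S : DAESys l n m p qL qM) (k : ℕ) :
    Matrix (Fin l ⊕ Fin p) (Fin n ⊕ Fin k) ℝ :=
  Matrix.fromBlocks S.A 0 S.C 0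

/-- `H = [[0,0],[0,I_k]]`. -/
def matH (n k : ℕ) : Matrix (Fin n ⊕ Fin k) (Fin n ⊕ Fin k) ℝ :=
  Matrix.fromBlocks 0 0 0 1

/-- `ℱ = [F, 0]`. -/
def calF {j : ℕ} (F : Matrix (Fin j) (Fin n) ℝ) (k : ℕ) :
    Matrix (Fin j) (Fin n ⊕ Fin k) ℝ :=
  Matrix.fromCols F 0

/-- `Θ̂ = [[0, JᵀΘ],[0,0]]`. -/
def hatTheta (S : DAESys l n m p qL qM) (Θ : Matrix (Fin qM) (Fin qM) ℝ) (k : ℕ) :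
    Matrix (Fin n ⊕ Fin k) (Fin qL ⊕ Fin qM) ℝ :=
  Matrix.fromBlocks 0 (S.Jᵀ * Θ) 0 0

/-- `𝒥 = [[JᵀJ,0],[0,0]]`. -/
def calJ (S : DAESys l n m p qL qM) (k : ℕ) :
    Matrix (Fin n ⊕ Fin k) (Fin n ⊕ Fin k) ℝ :=
  Matrix.fromBlocks (S.Jᵀ * S.J) 0 0 0

/-- `Λ_{q_L} = [[I_{q_L},0],[0,0]]`. -/
def lamQL (qL qM : ℕ) : Matrix (Fin qL ⊕ Fin qM) (Fin qL ⊕ Fin qM) ℝ :=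
  Matrix.fromBlocks 1 0 0 0

/-- The matrix `𝒬` of the restricted linear matrix inequality. -/
def calQ {j : ℕ} (S : DAESys l n m p qL qM) (F : Matrix (Fin j) (Fin n) ℝ)
    (Θ : Matrix (Fin qM) (Fin qM) ℝ) (μ δ : ℝ)
    (P : Matrix (Fin l ⊕ Fin p) (Fin n ⊕ Fin k) ℝ)
    (K : Matrix (Fin n ⊕ Fin k) (Fin n ⊕ Fin k) ℝ) :
    Matrix ((Fin n ⊕ Fin k) ⊕ (Fin qL ⊕ Fin qM)) ((Fin n ⊕ Fin k) ⊕ (Fin qL ⊕ Fin qM)) ℝ :=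
  Matrix.fromBlocks
    ((S.hatA k)ᵀ * P + Pᵀ * S.hatA k + (matH n k)ᵀ * Kᵀ + K * matH n k
      + δ • ((calF F k)ᵀ * calF F k) - μ • S.calJ k)
    (Pᵀ * S.calB + S.hatTheta Θ k)
    (S.calBᵀ * P + (S.hatTheta Θ k)ᵀ)
    (-(δ • lamQL qL qM))

/-- The Wong limit `V*` of the augmented pencil `s[ℰ,0] - [𝒜,ℬ]`. -/
def wongAug (S : DAESys l n m p qL qM)
    (L₁ : Matrix (Fin l) (Fin k) ℝ) (L₂ : Matrix (Fin p) (Fin k) ℝ) :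
    Set ((Fin n ⊕ Fin k) ⊕ (Fin qL ⊕ Fin qM) → ℝ) :=
  wongVstar
    (Matrix.fromCols (S.calE k) (0 : Matrix (Fin l ⊕ Fin p) (Fin qL ⊕ Fin qM) ℝ))
    (Matrix.fromCols (S.calA L₁ L₂) S.calB)

/-- The projected Wong limit `V̄* = [I_{n+k}, 0] V*`. -/
def wongAugProj (S : DAESys l n m p qL qM)
    (L₁ : Matrix (Fin l) (Fin k) ℝ) (L₂ : Matrix (Fin p) (Fin k) ℝ) :
    Set (Fin n ⊕ Fin k → ℝ) :=
  (fun (v : (Fin n ⊕ Fin k) ⊕ (Fin qL ⊕ Fin qM) → ℝ) (i : Fin n ⊕ Fin k) => v (Sum.inl i)) ''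
    S.wongAug L₁ L₂

end DAESys

/-!
Along a pair of solutions, `w = (z - x, d, φ)` satisfies the error system
`d/dt (ℰ w) = [𝒜, ℬ] w` with `ℰ w = (E (z - x), 0)` differentiable, although `d` and `φ` need
not be. Any such trajectory of a pencil `sE - A` stays in every Wong space `V^i`: if it stays in
`V^i`, then `E w` stays in the closed subspace `E V^i`, hence so does its derivative `A w`,
i.e. `w ∈ V^{i+1}`.
-/

section WongSequence

variable {L N : Type*} [Fintype N] (E A : Matrix L N ℝ)

def wongVSubmodule : ℕ → Submodule ℝ (N → ℝ)
  | 0 => ⊤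
  | i + 1 => ((wongVSubmodule i).map E.mulVecLin).comap A.mulVecLin

theorem coe_wongVSubmodule : ∀ i, (wongVSubmodule E A i : Set (N → ℝ)) = wongV E A i
  | 0 => rfl
  | i + 1 => by
    ext v
    simp [wongVSubmodule, wongV, ← coe_wongVSubmodule i]

theorem Submodule.mem_of_hasDerivWithinAt {F : Type*} [NormedAddCommGroup F] [NormedSpace ℝ F]
    (W : Submodule ℝ F) (hW : IsClosed (W : Set F)) {f : ℝ → F} {f' : F} {s : Set ℝ} {t : ℝ}
    (hf : HasDerivWithinAt f f' s t) (hs : UniqueDiffWithinAt ℝ s t) (hfW : MapsTo f s W) :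
    f' ∈ W := by
  have hderiv : derivWithin f s t ∈ closure (Submodule.span ℝ (f '' s) : Set F) :=
    range_derivWithin_subset_closure_span_image f (s := s) (t := s) (by simp [subset_closure])
      ⟨t, rfl⟩
  rw [hf.derivWithin hs] at hderiv
  exact closure_minimal (Submodule.span_le.mpr hfW.image_subset) hW hderiv

variable [Fintype L]

theorem HasDerivWithinAt.matrix_mulVec (M : Matrix L N ℝ) {f : ℝ → N → ℝ} {f' : N → ℝ}
    {s : Set ℝ} {t : ℝ} (hf : HasDerivWithinAt f f' s t) :
    HasDerivWithinAt (fun τ => M *ᵥ f τ) (M *ᵥ f') s t :=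
  (LinearMap.toContinuousLinearMap M.mulVecLin).hasFDerivAt.comp_hasDerivWithinAt t hf

variable {E A}

theorem mem_wongVSubmodule_of_hasDerivWithinAt {I : Set ℝ} (hI : UniqueDiffOn ℝ I)
    {w : ℝ → N → ℝ} (hw : ∀ t ∈ I, HasDerivWithinAt (fun s => E *ᵥ w s) (A *ᵥ w t) I t) :
    ∀ i, ∀ t ∈ I, w t ∈ wongVSubmodule E A i
  | 0, _, _ => Submodule.mem_top
  | i + 1, t, ht =>
    ((wongVSubmodule E A i).map E.mulVecLin).mem_of_hasDerivWithinAt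
      (Submodule.closed_of_finiteDimensional _) (hw t ht) (hI t ht)
      fun s hs => Submodule.mem_map_of_mem (mem_wongVSubmodule_of_hasDerivWithinAt hI hw i s hs)

theorem mem_wongVstar_of_hasDerivWithinAt {I : Set ℝ} (hI : UniqueDiffOn ℝ I) {w : ℝ → N → ℝ}
    (hw : ∀ t ∈ I, HasDerivWithinAt (fun s => E *ᵥ w s) (A *ᵥ w t) I t) {t : ℝ} (ht : t ∈ I) :
    w t ∈ wongVstar E A :=
  mem_iInter.mpr fun i => coe_wongVSubmodule E A i ▸
    mem_wongVSubmodule_of_hasDerivWithinAt hI hw i t ht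

end WongSequence

namespace DAESys

variable {l n m p qL qM k : ℕ} (S : DAESys l n m p qL qM)

theorem fromCols_calE_zero_mulVec (e : Fin n → ℝ) (d : Fin k → ℝ) (φ : Fin qL ⊕ Fin qM → ℝ) :
    fromCols (S.calE k) 0 *ᵥ Sum.elim (Sum.elim e d) φ = fromRows S.E 0 *ᵥ e := by
  simp [calE, fromBlocks_mulVec, fromRows_mulVec]

theorem fromCols_calA_calB_mulVec (L₁ : Matrix (Fin l) (Fin k) ℝ) (L₂ : Matrix (Fin p) (Fin k) ℝ)
    (e : Fin n → ℝ) (d : Fin k → ℝ) (φL : Fin qL → ℝ) (φM : Fin qM → ℝ) :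
    fromCols (S.calA L₁ L₂) S.calB *ᵥ Sum.elim (Sum.elim e d) (Sum.elim φL φM) =
      Sum.elim (S.A *ᵥ e + L₁ *ᵥ d + (S.BL *ᵥ φL + S.BM *ᵥ φM)) (S.C *ᵥ e + L₂ *ᵥ d) := by
  ext (j | j) <;> simp [calA, calB, fromBlocks_mulVec, fromRows_mulVec]

def errorTrajectory (x z : ℝ → Fin n → ℝ) (d : ℝ → Fin k → ℝ) (u : ℝ → Fin m → ℝ)
    (y : ℝ → Fin p → ℝ) (t : ℝ) : (Fin n ⊕ Fin k) ⊕ (Fin qL ⊕ Fin qM) → ℝ :=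
  Sum.elim (Sum.elim (z t - x t) (d t))
    (Sum.elim (S.fL (z t) (u t) (y t) - S.fL (x t) (u t) (y t))
      (S.fM (S.J *ᵥ z t) (u t) (y t) - S.fM (S.J *ᵥ x t) (u t) (y t)))

variable {L₁ : Matrix (Fin l) (Fin k) ℝ} {L₂ : Matrix (Fin p) (Fin k) ℝ} {I : Set ℝ}
  {x x' z z' : ℝ → Fin n → ℝ} {d : ℝ → Fin k → ℝ} {u : ℝ → Fin m → ℝ} {y : ℝ → Fin p → ℝ}

theorem fromCols_calA_calB_mulVec_errorTrajectory (hx : S.IsSolutionOn I x x' u y)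
    (hz : S.ObsSolOn L₁ L₂ I z z' d u y) {t : ℝ} (ht : t ∈ I) :
    fromCols (S.calA L₁ L₂) S.calB *ᵥ S.errorTrajectory x z d u y t =
      fromRows S.E 0 *ᵥ (z' t - x' t) := by
  obtain ⟨-, -, -, -, -, hxeq, hxout⟩ := hx
  obtain ⟨-, -, -, -, hzeq, hzout⟩ := hz
  have hstate : S.A *ᵥ (z t - x t) + L₁ *ᵥ d t
      + (S.BL *ᵥ (S.fL (z t) (u t) (y t) - S.fL (x t) (u t) (y t))
        + S.BM *ᵥ (S.fM (S.J *ᵥ z t) (u t) (y t) - S.fM (S.J *ᵥ x t) (u t) (y t)))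
      = S.E *ᵥ (z' t - x' t) := by
    simp only [mulVec_sub]
    linear_combination hxeq t ht - hzeq t ht
  have houtput : S.C *ᵥ (z t - x t) + L₂ *ᵥ d t = 0 := by
    rw [mulVec_sub]
    linear_combination hxout t ht - hzout t ht
  rw [errorTrajectory, fromCols_calA_calB_mulVec, hstate, houtput, fromRows_mulVec, zero_mulVec]

theorem hasDerivWithinAt_fromCols_calE_zero_mulVec_errorTrajectory
    (hx : S.IsSolutionOn I x x' u y) (hz : S.ObsSolOn L₁ L₂ I z z' d u y) {t : ℝ} (ht : t ∈ I) :
    HasDerivWithinAt (fun s => fromCols (S.calE k) 0 *ᵥ S.errorTrajectory x z d u y s)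
      (fromCols (S.calA L₁ L₂) S.calB *ᵥ S.errorTrajectory x z d u y t) I t := by
  have hE : (fun s => fromCols (S.calE k) 0 *ᵥ S.errorTrajectory x z d u y s) =
      fun s => fromRows S.E 0 *ᵥ (z s - x s) :=
    funext fun s => S.fromCols_calE_zero_mulVec _ _ _
  rw [hE, S.fromCols_calA_calB_mulVec_errorTrajectory hx hz ht]
  obtain ⟨-, -, -, -, hxd, -⟩ := hx
  obtain ⟨-, -, -, hzd, -⟩ := hz
  exact ((hzd t ht).sub (hxd t ht)).matrix_mulVec _

end DAESys

theorem error_trajectory_in_wong_limit_general {l n m p qL qM k : ℕ}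
    (S : DAESys l n m p qL qM)
    (L₁ : Matrix (Fin l) (Fin k) ℝ) (L₂ : Matrix (Fin p) (Fin k) ℝ)
    (I : Set ℝ) (hIopen : IsOpen I)
    (x x' : ℝ → Fin n → ℝ) (u : ℝ → Fin m → ℝ) (y : ℝ → Fin p → ℝ)
    (z z' : ℝ → Fin n → ℝ) (d : ℝ → Fin k → ℝ)
    (hx : S.IsSolutionOn I x x' u y)
    (hz : S.ObsSolOn L₁ L₂ I z z' d u y) :
    ∀ t ∈ I,
      Sum.elim (Sum.elim (z t - x t) (d t))
        (Sum.elim (S.fL (z t) (u t) (y t) - S.fL (x t) (u t) (y t))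
          (S.fM (S.J *ᵥ z t) (u t) (y t) - S.fM (S.J *ᵥ x t) (u t) (y t)))
      ∈ S.wongAug L₁ L₂ := fun _ ht =>
  mem_wongVstar_of_hasDerivWithinAt hIopen.uniqueDiffOn
    (fun _ hs => S.hasDerivWithinAt_fromCols_calE_zero_mulVec_errorTrajectory hx hz hs) ht

/-- For a solution `(x,u,y)` of the system and a solution `((z,d),(u,y),z)` of the observer
candidate on an open interval `I`, the combined trajectory `(e, d, φ)` of error state,
innovations and nonlinearity difference evolves in the Wong limit `V*` of the augmented
pencil `s[ℰ,0] - [𝒜,ℬ]`. -/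
theorem error_trajectory_in_wong_limit {l n m p qL qM k : ℕ}
    (S : DAESys l n m p qL qM) (hS : S.Admissible)
    (L₁ : Matrix (Fin l) (Fin k) ℝ) (L₂ : Matrix (Fin p) (Fin k) ℝ)
    (I : Set ℝ) (hIopen : IsOpen I) (hIconn : I.OrdConnected)
    (x x' : ℝ → Fin n → ℝ) (u : ℝ → Fin m → ℝ) (y : ℝ → Fin p → ℝ)
    (z z' : ℝ → Fin n → ℝ) (d : ℝ → Fin k → ℝ)
    (hx : S.IsSolutionOn I x x' u y)
    (hz : S.ObsSolOn L₁ L₂ I z z' d u y) :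
    ∀ t ∈ I,
      Sum.elim (Sum.elim (z t - x t) (d t))
        (Sum.elim (S.fL (z t) (u t) (y t) - S.fL (x t) (u t) (y t))
          (S.fM (S.J *ᵥ z t) (u t) (y t) - S.fM (S.J *ᵥ x t) (u t) (y t)))
      ∈ S.wongAug L₁ L₂ :=
  error_trajectory_in_wong_limit_general S L₁ L₂ I hIopen x x' u y z z' d hx hz
end

section
/- Let ℰ, 𝒜 ∈ ℝ^{L×N} and ℬ ∈ ℝ^{L×Q}. Then for every i ∈ ℕ₀, the i-th Wong subspace of the pencil sℰ − 𝒜 is contained in the image under the projection [I_N, 0] of the i-th Wong subspace of the pencil s[ℰ,0] − [𝒜,ℬ]: V^i_{[ℰ,𝒜]} ⊆ [I_N,0] V^i_{[[ℰ,0],[𝒜,ℬ]]}. Consequently, V*_{[ℰ,𝒜]} ⊆ [I_N,0] V*_{[[ℰ,0],[𝒜,ℬ]]}. -/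
open Matrix Set Filter

section WongAugmented

variable {L N Q : Type*} [Fintype N] [Fintype Q]
  (E A : Matrix L N ℝ) (B : Matrix L Q ℝ)

-- On a vector `(x, 0)` padded with zero inputs the extra columns `0` and `B` act trivially,
-- so every step of the Wong recursion of `[E, A]` lifts to the augmented pencil.
theorem sumElim_zero_mem_wongV_fromCols {x : N → ℝ} :
    ∀ {i : ℕ}, x ∈ wongV E A i →
      Sum.elim x 0 ∈ wongV (fromCols E (0 : Matrix L Q ℝ)) (fromCols A B) i
  | 0, _ => trivial
  | _ + 1, ⟨y, hy, hEy⟩ =>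
    ⟨Sum.elim y 0, sumElim_zero_mem_wongV_fromCols hy, by
      simp only [fromCols_mulVec_sumElim, mulVec_zero, add_zero, hEy]⟩

theorem sumElim_zero_mem_wongVstar_fromCols {x : N → ℝ} (hx : x ∈ wongVstar E A) :
    Sum.elim x 0 ∈ wongVstar (fromCols E (0 : Matrix L Q ℝ)) (fromCols A B) :=
  mem_iInter.2 fun _ => sumElim_zero_mem_wongV_fromCols E A B (mem_iInter.1 hx _)

end WongAugmented

/-- The Wong subspaces of the pencil `sE - A` are contained in the projections (onto the
first `N` coordinates) of the Wong subspaces of the augmented pencil `s[E,0] - [A,B]`;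
consequently the same holds for the Wong limits. -/
theorem wongV_subset_proj_wongV_aug {L N Q : ℕ}
    (E A : Matrix (Fin L) (Fin N) ℝ) (B : Matrix (Fin L) (Fin Q) ℝ) :
    (∀ i : ℕ, wongV E A i ⊆
      (fun (v : Fin N ⊕ Fin Q → ℝ) (j : Fin N) => v (Sum.inl j)) ''
        wongV (Matrix.fromCols E (0 : Matrix (Fin L) (Fin Q) ℝ))
          (Matrix.fromCols A B) i) ∧
    wongVstar E A ⊆
      (fun (v : Fin N ⊕ Fin Q → ℝ) (j : Fin N) => v (Sum.inl j)) ''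
        wongVstar (Matrix.fromCols E (0 : Matrix (Fin L) (Fin Q) ℝ))
          (Matrix.fromCols A B) :=
  ⟨fun _ x hx => ⟨Sum.elim x 0, sumElim_zero_mem_wongV_fromCols E A B hx, rfl⟩,
    fun x hx => ⟨Sum.elim x 0, sumElim_zero_mem_wongVstar_fromCols E A B hx, rfl⟩⟩
end

section
/- Let ℰ ∈ ℝ^{N×N}, let ℳ, 𝒩 ∈ ℝ^{N×N} be invertible with ℳℰ𝒩 = [[I_r, 0],[0, 0]] for some 0 ≤ r ≤ N, and let 𝒫 = ℳᵀ [[P₁, P₂],[P₃, P₄]] 𝒩^{−1} with blocks P₁ ∈ ℝ^{r×r}, P₄ ∈ ℝ^{(N−r)×(N−r)}, P₂, P₃ᵀ ∈ ℝ^{r×(N−r)}. If ℰᵀ𝒫 = 𝒫ᵀℰ, then P₂ = 0 and ℰᵀ𝒫 = 𝒩^{−T} [[P₁, 0],[0, 0]] 𝒩^{−1}; if moreover 𝒫 is invertible, then P₁ and P₄ are invertible. -/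
open Matrix Set Filter

/-- Block structure of `𝒫` induced by the symmetry `ℰᵀ𝒫 = 𝒫ᵀℰ` in coordinates where
`ℳℰ𝒩 = [[I_r,0],[0,0]]` : the block `P₂` vanishes, `ℰᵀ𝒫 = 𝒩⁻ᵀ[[P₁,0],[0,0]]𝒩⁻¹`, and if
`𝒫` is invertible then so are `P₁` and `P₄`. -/
theorem block_structure_of_symmetric_EtP {r s : ℕ}
    (E M N P : Matrix (Fin r ⊕ Fin s) (Fin r ⊕ Fin s) ℝ)
    (hM : IsUnit M) (hN : IsUnit N)
    (hMEN : M * E * N = Matrix.fromBlocks (1 : Matrix (Fin r) (Fin r) ℝ) 0 0 0)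
    (P₁ : Matrix (Fin r) (Fin r) ℝ) (P₂ : Matrix (Fin r) (Fin s) ℝ)
    (P₃ : Matrix (Fin s) (Fin r) ℝ) (P₄ : Matrix (Fin s) (Fin s) ℝ)
    (hP : P = Mᵀ * Matrix.fromBlocks P₁ P₂ P₃ P₄ * N⁻¹)
    (hsym : Eᵀ * P = Pᵀ * E) :
    P₂ = 0 ∧
    Eᵀ * P = (N⁻¹)ᵀ * Matrix.fromBlocks P₁ 0 0 0 * N⁻¹ ∧
    (IsUnit P → IsUnit P₁ ∧ IsUnit P₄) := by
  have hMinv : M⁻¹ * M = 1 := Matrix.nonsing_inv_mul M ((Matrix.isUnit_iff_isUnit_det M).mp hM)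
  have hMinv' : M * M⁻¹ = 1 := Matrix.mul_nonsing_inv M ((Matrix.isUnit_iff_isUnit_det M).mp hM)
  have hNinv : N⁻¹ * N = 1 := Matrix.nonsing_inv_mul N ((Matrix.isUnit_iff_isUnit_det N).mp hN)
  have hNinv' : N * N⁻¹ = 1 := Matrix.mul_nonsing_inv N ((Matrix.isUnit_iff_isUnit_det N).mp hN)
  set B : Matrix (Fin r ⊕ Fin s) (Fin r ⊕ Fin s) ℝ :=
    Matrix.fromBlocks (1 : Matrix (Fin r) (Fin r) ℝ) 0 0 0 with hB
  have hE : E = M⁻¹ * B * N⁻¹ := by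
    have h := congrArg (fun X => M⁻¹ * X * N⁻¹) hMEN
    rw [← h, ← Matrix.mul_assoc M⁻¹ (M * E) N, Matrix.mul_assoc _ N N⁻¹, hNinv',
      Matrix.mul_one, ← Matrix.mul_assoc, hMinv, Matrix.one_mul]
  have hEt : Eᵀ * P = (N⁻¹)ᵀ * Matrix.fromBlocks P₁ P₂ 0 0 * N⁻¹ := by
    have hBt : Bᵀ = B := by
      simp [hB, Matrix.fromBlocks_transpose]
    have : Eᵀ * P = (N⁻¹)ᵀ * (Bᵀ * ((M⁻¹)ᵀ * Mᵀ) * Matrix.fromBlocks P₁ P₂ P₃ P₄) * N⁻¹ := by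
      rw [hE, hP]
      simp [Matrix.transpose_mul, Matrix.mul_assoc]
    rw [this, ← Matrix.transpose_mul, hMinv', Matrix.transpose_one, Matrix.mul_one, hBt, hB]
    simp [Matrix.fromBlocks_multiply]
  have hPtE : Pᵀ * E = (N⁻¹)ᵀ * Matrix.fromBlocks P₁ᵀ 0 P₂ᵀ 0 * N⁻¹ := by
    have : Pᵀ * E = (N⁻¹)ᵀ * ((Matrix.fromBlocks P₁ P₂ P₃ P₄)ᵀ * (M * M⁻¹) * B) * N⁻¹ := by
      rw [hE, hP]
      simp [Matrix.transpose_mul, Matrix.mul_assoc]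
    rw [this, hMinv', Matrix.mul_one, hB]
    simp [Matrix.fromBlocks_transpose, Matrix.fromBlocks_multiply]
  have hkey : Matrix.fromBlocks P₁ P₂ 0 0 = Matrix.fromBlocks P₁ᵀ 0 P₂ᵀ (0 : Matrix (Fin s) (Fin s) ℝ) := by
    have h1 : (N⁻¹)ᵀ * Matrix.fromBlocks P₁ P₂ 0 0 * N⁻¹
        = (N⁻¹)ᵀ * Matrix.fromBlocks P₁ᵀ 0 P₂ᵀ 0 * N⁻¹ := by
      rw [← hEt, ← hPtE, hsym]
    have h2 := congrArg (fun X => Nᵀ * X * N) h1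
    have hNt : Nᵀ * (N⁻¹)ᵀ = 1 := by rw [← Matrix.transpose_mul, hNinv, Matrix.transpose_one]
    rwa [← Matrix.mul_assoc, ← Matrix.mul_assoc, ← Matrix.mul_assoc, ← Matrix.mul_assoc, hNt,
      Matrix.one_mul, Matrix.one_mul, Matrix.mul_assoc, Matrix.mul_assoc, hNinv,
      Matrix.mul_one, Matrix.mul_one] at h2
  have hP2 : P₂ = 0 := by
    have := congrArg (fun X => X.toBlocks₁₂) hkey
    simpa [Matrix.toBlocks_fromBlocks₁₂] using this
  refine ⟨hP2, by rw [hEt, hP2], fun hPu => ?_⟩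
  have hQ : IsUnit (Matrix.fromBlocks P₁ 0 P₃ P₄) := by
    have : Matrix.fromBlocks P₁ 0 P₃ P₄ = (Mᵀ)⁻¹ * P * N := by
      rw [hP, hP2]
      rw [← Matrix.mul_assoc, ← Matrix.mul_assoc, Matrix.nonsing_inv_mul _
        (by rw [Matrix.det_transpose]; exact ((Matrix.isUnit_iff_isUnit_det M).mp hM)),
        Matrix.one_mul, Matrix.mul_assoc, hNinv, Matrix.mul_one]
    rw [this]
    have hMt : IsUnit (Mᵀ)⁻¹ := Matrix.isUnit_nonsing_inv_iff.mpr <|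
      (Matrix.isUnit_iff_isUnit_det Mᵀ).mpr (by
        rw [Matrix.det_transpose]; exact (Matrix.isUnit_iff_isUnit_det M).mp hM)
    exact (hMt.mul hPu).mul hN
  have hdet := (Matrix.isUnit_iff_isUnit_det _).mp hQ
  rw [Matrix.det_fromBlocks_zero₁₂] at hdet
  exact ⟨(Matrix.isUnit_iff_isUnit_det _).mpr (isUnit_of_mul_isUnit_left hdet),
    (Matrix.isUnit_iff_isUnit_det _).mpr (isUnit_of_mul_isUnit_right hdet)⟩
end

section
/- Let F ∈ ℝ^{j×n}, J ∈ ℝ^{q_M×n}, G_L ∈ ℝ^{n×q_L} with ‖F G_L‖ < 1, and let α > 0 satisfy ‖Fx‖ ≤ α‖Jx‖ for all x ∈ ℝⁿ. Set κ := α‖J G_L‖ / (1 − ‖F G_L‖). If e₁, e₂ ∈ ℝⁿ and φ ∈ ℝ^{q_L} satisfy ‖φ‖ ≤ ‖F(e₁ + G_L φ + e₂)‖, then ‖J(e₁ + G_L φ)‖ ≤ (1 + κ)‖J e₁‖ + κ‖J e₂‖. -/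
open Matrix Set Filter

/-- Euclidean norm of a vector in `ℝ^ι`. -/
noncomputable def vecEnorm {ι : Type*} [Fintype ι] (x : ι → ℝ) : ℝ :=
  Real.sqrt (x ⬝ᵥ x)

/-!
The loop gain `‖F G_L‖ < 1` controls the feedback signal: splitting
`F(e₁ + G_L φ + e₂) = F e₁ + F e₂ + (F G_L) φ` gives
`‖φ‖ ≤ α(‖J e₁‖ + ‖J e₂‖) + ‖F G_L‖ ‖φ‖`, hence `‖φ‖ ≤ α(‖J e₁‖ + ‖J e₂‖)/(1 - ‖F G_L‖)`,
and then `‖J(e₁ + G_L φ)‖ ≤ ‖J e₁‖ + ‖J G_L‖ ‖φ‖`.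
-/

namespace ContinuousLinearMap

variable {𝕜 E U V W : Type*} [NontriviallyNormedField 𝕜]
  [SeminormedAddCommGroup E] [SeminormedAddCommGroup U] [SeminormedAddCommGroup V]
  [SeminormedAddCommGroup W] [NormedSpace 𝕜 E] [NormedSpace 𝕜 U] [NormedSpace 𝕜 V]
  [NormedSpace 𝕜 W] {F : E →L[𝕜] V} {J : E →L[𝕜] W} {G : U →L[𝕜] E} {α : ℝ}
  {e₁ e₂ : E} {φ : U}

theorem norm_le_div_of_small_gain (hFG : ‖F.comp G‖ < 1) (hFJ : ∀ x, ‖F x‖ ≤ α * ‖J x‖)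
    (hφ : ‖φ‖ ≤ ‖F (e₁ + G φ + e₂)‖) :
    ‖φ‖ ≤ α * (‖J e₁‖ + ‖J e₂‖) / (1 - ‖F.comp G‖) := by
  rw [le_div_iff₀ (sub_pos.2 hFG)]
  have hloop : ‖φ‖ ≤ ‖F e₁‖ + ‖F e₂‖ + ‖F.comp G‖ * ‖φ‖ :=
    calc ‖φ‖ ≤ ‖F (e₁ + G φ + e₂)‖ := hφ
      _ = ‖F e₁ + F e₂ + F.comp G φ‖ := by simp only [map_add, comp_apply, add_right_comm]
      _ ≤ ‖F e₁‖ + ‖F e₂‖ + ‖F.comp G‖ * ‖φ‖ :=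
        norm_add₃_le.trans (add_le_add_right (le_opNorm _ _) _)
  linarith [hFJ e₁, hFJ e₂]

theorem norm_map_add_le_of_small_gain (hFG : ‖F.comp G‖ < 1) (hFJ : ∀ x, ‖F x‖ ≤ α * ‖J x‖)
    (hφ : ‖φ‖ ≤ ‖F (e₁ + G φ + e₂)‖) :
    ‖J (e₁ + G φ)‖ ≤ (1 + α * ‖J.comp G‖ / (1 - ‖F.comp G‖)) * ‖J e₁‖
      + α * ‖J.comp G‖ / (1 - ‖F.comp G‖) * ‖J e₂‖ :=
  calc ‖J (e₁ + G φ)‖ ≤ ‖J e₁‖ + ‖J.comp G‖ * ‖φ‖ := by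
        rw [map_add]
        exact (norm_add_le _ _).trans (add_le_add_right ((J.comp G).le_opNorm φ) _)
    _ ≤ ‖J e₁‖ + ‖J.comp G‖ * (α * (‖J e₁‖ + ‖J e₂‖) / (1 - ‖F.comp G‖)) := by
        gcongr
        exact norm_le_div_of_small_gain hFG hFJ hφ
    _ = _ := by ring

end ContinuousLinearMap

theorem vecEnorm_eq_norm {ι : Type*} [Fintype ι] (x : ι → ℝ) :
    vecEnorm x = ‖WithLp.toLp 2 x‖ := by
  rw [vecEnorm, EuclideanSpace.norm_eq]
  simp [dotProduct, sq]

theorem matNorm_mul {ι κ ν : Type*} [Fintype ι] [Fintype κ] [DecidableEq κ] [Fintype ν]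
    [DecidableEq ν] (A : Matrix ι κ ℝ) (B : Matrix κ ν ℝ) :
    matNorm (A * B) =
      ‖(toEuclideanLin A).toContinuousLinearMap.comp (toEuclideanLin B).toContinuousLinearMap‖ := by
  rw [matNorm, toLpLin_mul_same]
  rfl

theorem mixed_small_gain_general {j n qM qL : ℕ}
    (F : Matrix (Fin j) (Fin n) ℝ) (J : Matrix (Fin qM) (Fin n) ℝ)
    (GLm : Matrix (Fin n) (Fin qL) ℝ)
    (hFG : matNorm (F * GLm) < 1)
    (α : ℝ)
    (hFJ : ∀ x : Fin n → ℝ, vecEnorm (F *ᵥ x) ≤ α * vecEnorm (J *ᵥ x))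
    (e₁ e₂ : Fin n → ℝ) (φ : Fin qL → ℝ)
    (hφ : vecEnorm φ ≤ vecEnorm (F *ᵥ (e₁ + GLm *ᵥ φ + e₂))) :
    vecEnorm (J *ᵥ (e₁ + GLm *ᵥ φ)) ≤
      (1 + α * matNorm (J * GLm) / (1 - matNorm (F * GLm))) * vecEnorm (J *ᵥ e₁)
        + α * matNorm (J * GLm) / (1 - matNorm (F * GLm)) * vecEnorm (J *ᵥ e₂) := by
  simp only [matNorm_mul] at hFG ⊢
  simp only [vecEnorm_eq_norm] at hFJ hφ ⊢
  exact ContinuousLinearMap.norm_map_add_le_of_small_gain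
    (F := (toEuclideanLin F).toContinuousLinearMap) (J := (toEuclideanLin J).toContinuousLinearMap)
    (G := (toEuclideanLin GLm).toContinuousLinearMap) (e₁ := WithLp.toLp 2 e₁)
    (e₂ := WithLp.toLp 2 e₂) (φ := WithLp.toLp 2 φ) hFG (fun x => hFJ x.ofLp) hφ

/-- With `κ = α‖J G_L‖/(1-‖F G_L‖)`: if `‖φ‖ ≤ ‖F(e₁ + G_L φ + e₂)‖` and `‖Fx‖ ≤ α‖Jx‖`
for all `x`, then `‖J(e₁ + G_L φ)‖ ≤ (1+κ)‖J e₁‖ + κ‖J e₂‖`. -/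
theorem mixed_small_gain {j n qM qL : ℕ}
    (F : Matrix (Fin j) (Fin n) ℝ) (J : Matrix (Fin qM) (Fin n) ℝ)
    (GLm : Matrix (Fin n) (Fin qL) ℝ)
    (hFG : matNorm (F * GLm) < 1)
    (α : ℝ) (hα : 0 < α)
    (hFJ : ∀ x : Fin n → ℝ, vecEnorm (F *ᵥ x) ≤ α * vecEnorm (J *ᵥ x))
    (e₁ e₂ : Fin n → ℝ) (φ : Fin qL → ℝ)
    (hφ : vecEnorm φ ≤ vecEnorm (F *ᵥ (e₁ + GLm *ᵥ φ + e₂))) :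
    vecEnorm (J *ᵥ (e₁ + GLm *ᵥ φ)) ≤
      (1 + α * matNorm (J * GLm) / (1 - matNorm (F * GLm))) * vecEnorm (J *ᵥ e₁)
        + α * matNorm (J * GLm) / (1 - matNorm (F * GLm)) * vecEnorm (J *ᵥ e₂) :=
  mixed_small_gain_general F J GLm hFG α hFJ e₁ e₂ φ hφ
end

section
/- Suppose E = 0 (so ℰ = 0) and 𝒜 ∈ ℝ^{(n+k)×(n+k)} is invertible (with l+p = n+k), and that 𝒫ᵀ[[0,L₁],[0,L₂]] = 𝒦H, so 𝒫ᵀ𝒜 = 𝒫ᵀÂ + 𝒦H. Then the restricted matrix inequality 𝒬 <_{ker[𝒜,ℬ]} 0 holds if and only if δ((ℱ𝒜^{−1}ℬ)ᵀ(ℱ𝒜^{−1}ℬ) − Λ_{q_L}) − (𝒜^{−1}ℬ)ᵀΘ̂ − Θ̂ᵀ𝒜^{−1}ℬ − μ(𝒜^{−1}ℬ)ᵀ𝒥(𝒜^{−1}ℬ) < 0 (negative definite on ℝ^{q_L+q_M}). -/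
open Matrix Set Filter

/-!
On `ker [𝒜, ℬ]` the first block is determined by the second: `(x, u)` lies in the kernel iff
`x = -𝒜⁻¹ℬ u`, so `S = [-𝒜⁻¹ℬ; I]` parametrises the kernel injectively and `𝒬 <_{ker} 0` is
negative definiteness of `Sᵀ𝒬S`. The hypothesis `𝒫ᵀ[[0,L₁],[0,L₂]] = 𝒦H` turns the upper left
block of `𝒬` into `𝒜ᵀ𝒫 + 𝒫ᵀ𝒜 + δℱᵀℱ - μ𝒥`, and the storage terms `𝒜ᵀ𝒫 + 𝒫ᵀ𝒜` cancel
against the coupling terms `𝒫ᵀℬ` in `Sᵀ𝒬S` because `𝒜 (𝒜⁻¹ℬ) = ℬ`.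
-/

section Congruence

variable {ι κ : Type*} [Fintype ι] [Fintype κ]

theorem dotProduct_mulVec_mulVec_eq (Q : Matrix ι ι ℝ) (S : Matrix ι κ ℝ) (u : κ → ℝ) :
    S *ᵥ u ⬝ᵥ Q *ᵥ (S *ᵥ u) = u ⬝ᵥ (Sᵀ * Q * S) *ᵥ u := by
  rw [Matrix.mul_assoc, ← mulVec_mulVec, dotProduct_mulVec u Sᵀ, vecMul_transpose,
    mulVec_mulVec]

theorem negDefOn_iff_of_eq_range {Q : Matrix ι ι ℝ} {V : Set (ι → ℝ)} {S : Matrix ι κ ℝ}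
    (hS : Function.Injective S.mulVec) (hV : V = Set.range S.mulVec) :
    NegDefOn Q V ↔ NegDefOn (Sᵀ * Q * S) Set.univ := by
  subst hV
  constructor
  · intro hQ u _ hu
    rw [← dotProduct_mulVec_mulVec_eq]
    exact hQ _ ⟨u, rfl⟩ ((map_ne_zero_iff S.mulVecLin hS).mpr hu)
  · rintro hSQS _ ⟨u, rfl⟩ hu
    rw [dotProduct_mulVec_mulVec_eq]
    exact hSQS u trivial fun h ↦ hu (by rw [h, mulVec_zero])

end Congruence

section KernelParametrization

variable {m n q : Type*} [Fintype q] [DecidableEq q]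

theorem fromRows_neg_one_mulVec_injective (G : Matrix n q ℝ) :
    Function.Injective (fromRows (-G) (1 : Matrix q q ℝ)).mulVec := by
  intro u w h
  simpa [fromRows_mulVec] using congrArg (fun v ↦ v ∘ Sum.inr) h

theorem ker_fromCols_mul_eq_range [Fintype m] [Fintype n] [DecidableEq n] {A : Matrix m n ℝ}
    {Ainv : Matrix n m ℝ} (hA : Ainv * A = 1) (G : Matrix n q ℝ) :
    {v | fromCols A (A * G) *ᵥ v = 0} = Set.range (fromRows (-G) (1 : Matrix q q ℝ)).mulVec := by
  ext v
  constructor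
  · intro hv
    obtain ⟨x, u, rfl⟩ : ∃ x u, v = Sum.elim x u := ⟨v ∘ Sum.inl, v ∘ Sum.inr, by simp⟩
    have hx : x = -(G *ᵥ u) := by
      simpa [fromCols_mulVec_sumElim, mulVec_add, mulVec_mulVec, ← Matrix.mul_assoc, hA,
        add_eq_zero_iff_eq_neg] using congrArg (Ainv *ᵥ ·) hv
    exact ⟨u, by simp [fromRows_mulVec, neg_mulVec, hx]⟩
  · rintro ⟨u, rfl⟩
    simp [fromRows_mulVec, neg_mulVec, mulVec_neg, mulVec_mulVec]

end KernelParametrization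

theorem fromRows_transpose_mul_fromBlocks_mul_fromRows {m n q : Type*} [Fintype m] [Fintype n]
    [Fintype q] [DecidableEq q] {A : Matrix m n ℝ} {B : Matrix m q ℝ} {G : Matrix n q ℝ}
    (hAG : A * G = B) (P : Matrix m n ℝ) (R : Matrix n n ℝ) (T : Matrix n q ℝ)
    (W : Matrix q q ℝ) :
    (fromRows (-G) (1 : Matrix q q ℝ))ᵀ *
        fromBlocks (Aᵀ * P + Pᵀ * A + R) (Pᵀ * B + T) (Bᵀ * P + Tᵀ) W *
        fromRows (-G) (1 : Matrix q q ℝ) =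
      Gᵀ * R * G - Gᵀ * T - Tᵀ * G + W := by
  have hGA : Gᵀ * Aᵀ = Bᵀ := by rw [← transpose_mul, hAG]
  rw [transpose_fromRows, fromCols_mul_fromBlocks, fromCols_mul_fromRows]
  simp only [transpose_neg, transpose_one, Matrix.neg_mul, Matrix.one_mul, Matrix.mul_one,
    Matrix.mul_add, Matrix.add_mul, Matrix.mul_neg]
  have hGPAG : Gᵀ * (Pᵀ * A) * G = Gᵀ * (Pᵀ * B) := by
    rw [Matrix.mul_assoc, Matrix.mul_assoc, hAG]
  rw [← Matrix.mul_assoc Gᵀ Aᵀ, hGA, hGPAG]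
  abel

theorem restricted_LMI_iff_reduced_negdef_general {n k l p qL qM j : ℕ}
    (A : Matrix (Fin l) (Fin n) ℝ) (C : Matrix (Fin p) (Fin n) ℝ)
    (L₁ : Matrix (Fin l) (Fin k) ℝ) (L₂ : Matrix (Fin p) (Fin k) ℝ)
    (μ δ : ℝ)
    (P : Matrix (Fin l ⊕ Fin p) (Fin n ⊕ Fin k) ℝ)
    (K : Matrix (Fin n ⊕ Fin k) (Fin n ⊕ Fin k) ℝ)
    -- block matrices
    (calA : Matrix (Fin l ⊕ Fin p) (Fin n ⊕ Fin k) ℝ)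
    (hcalA : calA = Matrix.fromBlocks A L₁ C L₂)
    (calB : Matrix (Fin l ⊕ Fin p) (Fin qL ⊕ Fin qM) ℝ)
    (hatA : Matrix (Fin l ⊕ Fin p) (Fin n ⊕ Fin k) ℝ)
    (hhatA : hatA = Matrix.fromBlocks A 0 C 0)
    (H : Matrix (Fin n ⊕ Fin k) (Fin n ⊕ Fin k) ℝ)
    (calF : Matrix (Fin j) (Fin n ⊕ Fin k) ℝ)
    (hatTheta : Matrix (Fin n ⊕ Fin k) (Fin qL ⊕ Fin qM) ℝ)
    (calJ : Matrix (Fin n ⊕ Fin k) (Fin n ⊕ Fin k) ℝ)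
    (Lam : Matrix (Fin qL ⊕ Fin qM) (Fin qL ⊕ Fin qM) ℝ)
    (Q : Matrix ((Fin n ⊕ Fin k) ⊕ (Fin qL ⊕ Fin qM)) ((Fin n ⊕ Fin k) ⊕ (Fin qL ⊕ Fin qM)) ℝ)
    (hQ : Q = Matrix.fromBlocks
      (hatAᵀ * P + Pᵀ * hatA + Hᵀ * Kᵀ + K * H + δ • (calFᵀ * calF) - μ • calJ)
      (Pᵀ * calB + hatTheta)
      (calBᵀ * P + hatThetaᵀ)
      (-(δ • Lam)))
    -- 𝒫ᵀ[[0,L₁],[0,L₂]] = 𝒦H, hence 𝒫ᵀ𝒜 = 𝒫ᵀÂ + 𝒦H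
    (hKH : Pᵀ * Matrix.fromBlocks (0 : Matrix (Fin l) (Fin n) ℝ) L₁ 0 L₂ = K * H)
    -- 𝒜 is invertible (in particular l + p = n + k)
    (Ainv : Matrix (Fin n ⊕ Fin k) (Fin l ⊕ Fin p) ℝ)
    (hAinv : calA * Ainv = 1 ∧ Ainv * calA = 1) :
    NegDefOn Q {v | Matrix.fromCols calA calB *ᵥ v = 0} ↔
    NegDefOn
      (δ • ((calF * Ainv * calB)ᵀ * (calF * Ainv * calB) - Lam)
        - (Ainv * calB)ᵀ * hatTheta - hatThetaᵀ * (Ainv * calB)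
        - μ • ((Ainv * calB)ᵀ * calJ * (Ainv * calB)))
      Set.univ := by
  obtain ⟨hright, hleft⟩ := hAinv
  have hAG : calA * (Ainv * calB) = calB := by rw [← Matrix.mul_assoc, hright, Matrix.one_mul]
  have hPA : Pᵀ * calA = Pᵀ * hatA + K * H := by
    rw [← hKH, ← Matrix.mul_add, hcalA, hhatA, fromBlocks_add]
    simp
  have hAP : calAᵀ * P = hatAᵀ * P + Hᵀ * Kᵀ := by
    simpa [transpose_mul] using congrArg transpose hPA
  have hQ' : Q = fromBlocks (calAᵀ * P + Pᵀ * calA + (δ • (calFᵀ * calF) - μ • calJ))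
      (Pᵀ * calB + hatTheta) (calBᵀ * P + hatThetaᵀ) (-(δ • Lam)) := by
    rw [hQ, hAP, hPA]
    abel_nf
  rw [Matrix.mul_assoc calF Ainv calB]
  generalize Ainv * calB = G at hAG ⊢
  rw [negDefOn_iff_of_eq_range (fromRows_neg_one_mulVec_injective G),
    hQ', fromRows_transpose_mul_fromBlocks_mul_fromRows hAG]
  · congr! 1
    simp only [transpose_mul, Matrix.mul_sub, Matrix.sub_mul, Matrix.mul_smul, Matrix.smul_mul,
      Matrix.mul_assoc, smul_sub]
    abel
  · rw [← hAG, ker_fromCols_mul_eq_range hleft]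

/-- In the purely algebraic case `E = 0` with `𝒜` invertible, the restricted matrix
inequality `𝒬 <_{ker[𝒜,ℬ]} 0` is equivalent to negative definiteness (on `ℝ^{q_L+q_M}`)
of the reduced matrix
`δ((ℱ𝒜⁻¹ℬ)ᵀ(ℱ𝒜⁻¹ℬ) - Λ) - (𝒜⁻¹ℬ)ᵀΘ̂ - Θ̂ᵀ𝒜⁻¹ℬ - μ(𝒜⁻¹ℬ)ᵀ𝒥(𝒜⁻¹ℬ)`. -/
theorem restricted_LMI_iff_reduced_negdef {n k l p qL qM j : ℕ}
    (E A : Matrix (Fin l) (Fin n) ℝ) (C : Matrix (Fin p) (Fin n) ℝ)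
    (BL : Matrix (Fin l) (Fin qL) ℝ) (BM : Matrix (Fin l) (Fin qM) ℝ)
    (L₁ : Matrix (Fin l) (Fin k) ℝ) (L₂ : Matrix (Fin p) (Fin k) ℝ)
    (F : Matrix (Fin j) (Fin n) ℝ) (J : Matrix (Fin qM) (Fin n) ℝ)
    (Θ : Matrix (Fin qM) (Fin qM) ℝ) (μ δ : ℝ) (hδ : 0 < δ)
    (P : Matrix (Fin l ⊕ Fin p) (Fin n ⊕ Fin k) ℝ)
    (K : Matrix (Fin n ⊕ Fin k) (Fin n ⊕ Fin k) ℝ)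
    -- E = 0, hence ℰ = 0
    (hE : E = 0)
    -- block matrices
    (calA : Matrix (Fin l ⊕ Fin p) (Fin n ⊕ Fin k) ℝ)
    (hcalA : calA = Matrix.fromBlocks A L₁ C L₂)
    (calB : Matrix (Fin l ⊕ Fin p) (Fin qL ⊕ Fin qM) ℝ)
    (hcalB : calB = Matrix.fromRows (Matrix.fromCols BL BM) 0)
    (hatA : Matrix (Fin l ⊕ Fin p) (Fin n ⊕ Fin k) ℝ)
    (hhatA : hatA = Matrix.fromBlocks A 0 C 0)
    (H : Matrix (Fin n ⊕ Fin k) (Fin n ⊕ Fin k) ℝ)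
    (hH : H = Matrix.fromBlocks 0 0 0 (1 : Matrix (Fin k) (Fin k) ℝ))
    (calF : Matrix (Fin j) (Fin n ⊕ Fin k) ℝ)
    (hcalF : calF = Matrix.fromCols F 0)
    (hatTheta : Matrix (Fin n ⊕ Fin k) (Fin qL ⊕ Fin qM) ℝ)
    (hhatTheta : hatTheta = Matrix.fromBlocks 0 (Jᵀ * Θ) 0 0)
    (calJ : Matrix (Fin n ⊕ Fin k) (Fin n ⊕ Fin k) ℝ)
    (hcalJ : calJ = Matrix.fromBlocks (Jᵀ * J) 0 0 0)
    (Lam : Matrix (Fin qL ⊕ Fin qM) (Fin qL ⊕ Fin qM) ℝ)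
    (hLam : Lam = Matrix.fromBlocks (1 : Matrix (Fin qL) (Fin qL) ℝ) 0 0 0)
    (Q : Matrix ((Fin n ⊕ Fin k) ⊕ (Fin qL ⊕ Fin qM)) ((Fin n ⊕ Fin k) ⊕ (Fin qL ⊕ Fin qM)) ℝ)
    (hQ : Q = Matrix.fromBlocks
      (hatAᵀ * P + Pᵀ * hatA + Hᵀ * Kᵀ + K * H + δ • (calFᵀ * calF) - μ • calJ)
      (Pᵀ * calB + hatTheta)
      (calBᵀ * P + hatThetaᵀ)
      (-(δ • Lam)))
    -- 𝒫ᵀ[[0,L₁],[0,L₂]] = 𝒦H, hence 𝒫ᵀ𝒜 = 𝒫ᵀÂ + 𝒦H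
    (hKH : Pᵀ * Matrix.fromBlocks (0 : Matrix (Fin l) (Fin n) ℝ) L₁ 0 L₂ = K * H)
    -- 𝒜 is invertible (in particular l + p = n + k)
    (Ainv : Matrix (Fin n ⊕ Fin k) (Fin l ⊕ Fin p) ℝ)
    (hAinv : calA * Ainv = 1 ∧ Ainv * calA = 1) :
    NegDefOn Q {v | Matrix.fromCols calA calB *ᵥ v = 0} ↔
    NegDefOn
      (δ • ((calF * Ainv * calB)ᵀ * (calF * Ainv * calB) - Lam)
        - (Ainv * calB)ᵀ * hatTheta - hatThetaᵀ * (Ainv * calB)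
        - μ • ((Ainv * calB)ᵀ * calJ * (Ainv * calB)))
      Set.univ :=
  restricted_LMI_iff_reduced_negdef_general A C L₁ L₂ μ δ P K calA hcalA calB hatA hhatA H calF
    hatTheta calJ Lam Q hQ hKH Ainv hAinv
end
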